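/- arXiv:1910.05403 — 3 statements merged into one kernel-verified Lean document; each statement's English description precedes it below -/
import Mathlib

section
/- Let M ⊆ ℂ be open and connected, and let x, y : M → ℂ be holomorphic with x(w) ≠ y(w), x'(w) ≠ 0 and y'(w) ≠ 0 for all w ∈ M. Suppose x'' = 2(x')²/(x - y) and y'' = -2(y')²/(x - y) on M. Then the function 1/x' + 1/y' is constant on M; i.e., there exists c ∈ ℂ such that y'(w) = x'(w)/(c·x'(w) - 1) for all w ∈ M (with c·x'(w) ≠ 1). -/
theorem stmt_7 (M : Set ℂ) (hM : IsOpen M) (hMc : IsConnected M)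
    (x y : ℂ → ℂ) (hx : DifferentiableOn ℂ x M) (hy : DifferentiableOn ℂ y M)
    (hxy : ∀ w ∈ M, x w ≠ y w)
    (hx' : ∀ w ∈ M, deriv x w ≠ 0) (hy' : ∀ w ∈ M, deriv y w ≠ 0)
    (hxx : ∀ w ∈ M, deriv (deriv x) w = 2 * (deriv x w) ^ 2 / (x w - y w))
    (hyy : ∀ w ∈ M, deriv (deriv y) w = -2 * (deriv y w) ^ 2 / (x w - y w)) :
    ∃ c : ℂ, ∀ w ∈ M,
      1 / deriv x w + 1 / deriv y w = c ∧
      c * deriv x w ≠ 1 ∧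
      deriv y w = deriv x w / (c * deriv x w - 1) := by
  set u := deriv x with hu
  set v := deriv y with hv
  set f : ℂ → ℂ := fun w => (u w)⁻¹ + (v w)⁻¹ with hf
  have hxa : AnalyticOnNhd ℂ x M := hx.analyticOnNhd hM
  have hya : AnalyticOnNhd ℂ y M := hy.analyticOnNhd hM
  have hua : AnalyticOnNhd ℂ u M := hxa.deriv
  have hva : AnalyticOnNhd ℂ v M := hya.deriv
  -- f has zero derivative on M
  have key : ∀ w ∈ M, HasDerivAt f 0 w := by
    intro w hw
    have hu1 : HasDerivAt u (deriv u w) w := (hua w hw).differentiableAt.hasDerivAt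
    have hv1 : HasDerivAt v (deriv v w) w := (hva w hw).differentiableAt.hasDerivAt
    have h1 : HasDerivAt (fun z => (u z)⁻¹) (-(deriv u w) / (u w) ^ 2) w :=
      hu1.inv (hx' w hw)
    have h2 : HasDerivAt (fun z => (v z)⁻¹) (-(deriv v w) / (v w) ^ 2) w :=
      hv1.inv (hy' w hw)
    have h3 := h1.add h2
    have hne : x w - y w ≠ 0 := sub_ne_zero.mpr (hxy w hw)
    have : -(deriv u w) / (u w) ^ 2 + -(deriv v w) / (v w) ^ 2 = 0 := by
      have hu0 : u w ≠ 0 := hx' w hw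
      have hv0 : v w ≠ 0 := hy' w hw
      rw [hxx w hw, hyy w hw]
      field_simp
      ring
    rwa [this] at h3
  -- f is locally constant on M (as a function on the subtype)
  have hloc : IsLocallyConstant (fun p : M => f p.1) := by
    rw [IsLocallyConstant.iff_exists_open]
    rintro ⟨w, hw⟩
    obtain ⟨ε, hε, hball⟩ := Metric.isOpen_iff.1 hM w hw
    refine ⟨Subtype.val ⁻¹' Metric.ball w ε, (Metric.isOpen_ball).preimage continuous_subtype_val,
      by simpa using hε, ?_⟩
    rintro ⟨z, hz⟩ hzb
    simp only [Set.mem_preimage] at hzb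
    have hconv : Convex ℝ (Metric.ball w ε) := convex_ball w ε
    have hdiff : DifferentiableOn ℂ f (Metric.ball w ε) := fun p hp =>
      ((key p (hball hp)).differentiableAt).differentiableWithinAt
    have hzero : ∀ p ∈ Metric.ball w ε, fderivWithin ℂ f (Metric.ball w ε) p = 0 := by
      intro p hp
      have : fderivWithin ℂ f (Metric.ball w ε) p = fderiv ℂ f p :=
        fderivWithin_of_isOpen Metric.isOpen_ball hp
      rw [this, (key p (hball hp)).hasFDerivAt.fderiv]
      ext
      simp
    exact hconv.is_const_of_fderivWithin_eq_zero hdiff hzero hzb (Metric.mem_ball_self hε)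
  obtain ⟨w0, hw0⟩ := hMc.nonempty
  haveI : PreconnectedSpace M := Subtype.preconnectedSpace hMc.isPreconnected
  refine ⟨f w0, ?_⟩
  intro w hw
  have hcw : f w = f w0 := hloc.apply_eq_of_preconnectedSpace ⟨w, hw⟩ ⟨w0, hw0⟩
  have hc : (u w)⁻¹ + (v w)⁻¹ = f w0 := hcw
  have hu0 : u w ≠ 0 := hx' w hw
  have hv0 : v w ≠ 0 := hy' w hw
  have hsub : f w0 * u w - 1 = u w / v w := by
    rw [← hc]; field_simp; ring
  refine ⟨by rw [one_div, one_div, hc], ?_, ?_⟩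
  · intro h
    have : u w / v w = 0 := by rw [← hsub, h, sub_self]
    exact hu0 (by simpa [hv0] using this)
  · rw [hsub, div_div_eq_mul_div, mul_comm, mul_div_assoc, div_self hu0, mul_one]
end

section
/- Let a, b, k ∈ ℂ with k ≠ 0, and define x(w) = a + exp(k·w + b) and y(w) = a - exp(k·w + b) for w ∈ ℂ. Then x - y never vanishes, and the pair (x, y) satisfies the system x''(w) = 2·x'(w)²/(x(w) - y(w)) and y''(w) = -2·y'(w)²/(x(w) - y(w)) for all w ∈ ℂ. -/
open Complex

lemma deriv_cexp_mul_add (k b : ℂ) :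
    deriv (fun w => cexp (k * w + b)) = fun w => k * cexp (k * w + b) := by
  funext w
  have hlin : HasDerivAt (fun w => k * w + b) k w := by
    simpa using ((hasDerivAt_id w).const_mul k).add_const b
  rw [hlin.cexp.deriv, mul_comm]

lemma deriv_deriv_cexp_mul_add (k b : ℂ) :
    deriv (deriv fun w => cexp (k * w + b)) = fun w => k ^ 2 * cexp (k * w + b) := by
  funext w
  rw [deriv_cexp_mul_add, deriv_const_mul _ (by fun_prop), deriv_cexp_mul_add]
  ring

theorem stmt_9_general (a b k : ℂ) :
    let x : ℂ → ℂ := fun w => a + Complex.exp (k * w + b)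
    let y : ℂ → ℂ := fun w => a - Complex.exp (k * w + b)
    (∀ w : ℂ, x w - y w ≠ 0) ∧
    (∀ w : ℂ, deriv (deriv x) w = 2 * (deriv x w) ^ 2 / (x w - y w)) ∧
    (∀ w : ℂ, deriv (deriv y) w = -2 * (deriv y w) ^ 2 / (x w - y w)) := by
  intro x y
  have hxy (w : ℂ) : x w - y w = 2 * cexp (k * w + b) := by ring
  have hx' : deriv x = fun w => k * cexp (k * w + b) := by
    simp only [x, deriv_const_add', deriv_cexp_mul_add]
  have hy' : deriv y = fun w => -(k * cexp (k * w + b)) := by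
    simp only [y, deriv_const_sub', deriv_cexp_mul_add]
  have hx'' : deriv (deriv x) = fun w => k ^ 2 * cexp (k * w + b) := by
    simp only [x, deriv_const_add', deriv_deriv_cexp_mul_add]
  have hy'' : deriv (deriv y) = fun w => -(k ^ 2 * cexp (k * w + b)) := by
    rw [hy']
    funext w
    rw [deriv.fun_neg, ← hx', hx'']
  refine ⟨fun w => ?_, fun w => ?_, fun w => ?_⟩
  · simp [hxy, exp_ne_zero]
  · rw [hx'', hx', hxy]
    field_simp
  · rw [hy'', hy', hxy]
    field_simp

theorem stmt_9 (a b k : ℂ) (hk : k ≠ 0) :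
    let x : ℂ → ℂ := fun w => a + Complex.exp (k * w + b)
    let y : ℂ → ℂ := fun w => a - Complex.exp (k * w + b)
    (∀ w : ℂ, x w - y w ≠ 0) ∧
    (∀ w : ℂ, deriv (deriv x) w = 2 * (deriv x w) ^ 2 / (x w - y w)) ∧
    (∀ w : ℂ, deriv (deriv y) w = -2 * (deriv y w) ^ 2 / (x w - y w)) :=
  stmt_9_general a b k
end

section
/- Define f(u,v) = (√2/2)·(sinh(v-u), -sin(u+v), cos(u+v), -cosh(v-u)) and ν(u,v) = (√2/2)·(sinh(v-u), sin(u+v), -cos(u+v), -cosh(v-u)) as maps ℝ² → ℝ⁴ with the Minkowski inner product ⟨u,v⟩ = -u₁v₁ + u₂v₂ + u₃v₃ + u₄v₄. Then for all (u,v): ⟨f,f⟩ = 1, ⟨ν,ν⟩ = 1, ⟨f,ν⟩ = 0, ⟨f_u,ν⟩ = ⟨f_v,ν⟩ = 0, ⟨f_u,f_u⟩ = ⟨f_v,f_v⟩ = 0, ⟨f_u,f_v⟩ = 1, and ⟨f_{uv},ν⟩ = 0. -/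
/-- The Minkowski inner product on ℝ⁴, signature (-,+,+,+). -/
def mink (u v : Fin 4 → ℝ) : ℝ :=
  -(u 0 * v 0) + u 1 * v 1 + u 2 * v 2 + u 3 * v 3

noncomputable def f (p : ℝ × ℝ) : Fin 4 → ℝ :=
  (Real.sqrt 2 / 2) •
    ![Real.sinh (p.2 - p.1), -Real.sin (p.1 + p.2), Real.cos (p.1 + p.2),
      -Real.cosh (p.2 - p.1)]

noncomputable def ν (p : ℝ × ℝ) : Fin 4 → ℝ :=
  (Real.sqrt 2 / 2) •
    ![Real.sinh (p.2 - p.1), Real.sin (p.1 + p.2), -Real.cos (p.1 + p.2),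
      -Real.cosh (p.2 - p.1)]

noncomputable def fu (p : ℝ × ℝ) : Fin 4 → ℝ := fderiv ℝ f p (1, 0)
noncomputable def fv (p : ℝ × ℝ) : Fin 4 → ℝ := fderiv ℝ f p (0, 1)
noncomputable def fuv (p : ℝ × ℝ) : Fin 4 → ℝ := fderiv ℝ fu p (0, 1)

/-!
In the null coordinates `v - u` and `u + v` the surface splits as
`f = (√2/2) • (hyperbola (v - u) + circle (u + v))`, a unit hyperbola in the Lorentzian
`(e₀, e₃)`-plane plus a unit circle in the Euclidean `(e₁, e₂)`-plane, and `ν` reflects the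
circle. Since `hyperbola'' = hyperbola` and `circle'' = -circle`, `f_uv = -f`. The two planes are
Minkowski-orthogonal, so every identity reduces to `cosh² - sinh² = 1` and `sin² + cos² = 1`.
-/

open Real

section DAlembert

variable {E : Type*} [NormedAddCommGroup E] [NormedSpace ℝ E]

def dAlembert (a b : ℝ → E) (p : ℝ × ℝ) : E := a (p.2 - p.1) + b (p.1 + p.2)

theorem fderiv_dAlembert_apply {a b : ℝ → E} {a' b' : E} {p : ℝ × ℝ}
    (ha : HasDerivAt a a' (p.2 - p.1)) (hb : HasDerivAt b b' (p.1 + p.2)) (w : ℝ × ℝ) :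
    fderiv ℝ (dAlembert a b) p w = (w.2 - w.1) • a' + (w.1 + w.2) • b' := by
  have h : HasFDerivAt (dAlembert a b) _ p :=
    (ha.hasFDerivAt.comp p (hasFDerivAt_snd.sub hasFDerivAt_fst)).add
      (hb.hasFDerivAt.comp p (hasFDerivAt_fst.add hasFDerivAt_snd))
  simp [h.fderiv, sub_smul, add_smul]

end DAlembert

namespace DeSitterSurface

noncomputable def hyperbola (t : ℝ) : Fin 4 → ℝ := ![sinh t, 0, 0, -cosh t]
noncomputable def hyperbolaDeriv (t : ℝ) : Fin 4 → ℝ := ![cosh t, 0, 0, -sinh t]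
noncomputable def circle (s : ℝ) : Fin 4 → ℝ := ![0, -sin s, cos s, 0]
noncomputable def circleDeriv (s : ℝ) : Fin 4 → ℝ := ![0, -cos s, -sin s, 0]

theorem hasDerivAt_hyperbola (t : ℝ) : HasDerivAt hyperbola (hyperbolaDeriv t) t := by
  refine hasDerivAt_pi.2 fun i => ?_
  fin_cases i
  · exact hasDerivAt_sinh t
  · exact hasDerivAt_const t 0
  · exact hasDerivAt_const t 0
  · exact (hasDerivAt_cosh t).neg

theorem hasDerivAt_hyperbolaDeriv (t : ℝ) : HasDerivAt hyperbolaDeriv (hyperbola t) t := by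
  refine hasDerivAt_pi.2 fun i => ?_
  fin_cases i
  · exact hasDerivAt_cosh t
  · exact hasDerivAt_const t 0
  · exact hasDerivAt_const t 0
  · exact (hasDerivAt_sinh t).neg

theorem hasDerivAt_circle (s : ℝ) : HasDerivAt circle (circleDeriv s) s := by
  refine hasDerivAt_pi.2 fun i => ?_
  fin_cases i
  · exact hasDerivAt_const s 0
  · exact (hasDerivAt_sin s).neg
  · exact hasDerivAt_cos s
  · exact hasDerivAt_const s 0

theorem hasDerivAt_circleDeriv (s : ℝ) : HasDerivAt circleDeriv (-circle s) s := by
  refine hasDerivAt_pi.2 fun i => ?_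
  fin_cases i
  · simpa [circle, circleDeriv] using hasDerivAt_const s (0 : ℝ)
  · simpa [circle, circleDeriv] using (hasDerivAt_cos s).fun_neg
  · simpa [circle, circleDeriv] using (hasDerivAt_sin s).fun_neg
  · simpa [circle, circleDeriv] using hasDerivAt_const s (0 : ℝ)

theorem f_eq_dAlembert : f = dAlembert ((√2 / 2) • hyperbola) ((√2 / 2) • circle) := by
  ext p i
  fin_cases i <;> simp [f, dAlembert, hyperbola, circle]

theorem ν_apply (p : ℝ × ℝ) :
    ν p = (√2 / 2) • (hyperbola (p.2 - p.1) - circle (p.1 + p.2)) := by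
  ext i
  fin_cases i <;> simp [ν, hyperbola, circle]

theorem fu_eq_dAlembert :
    fu = dAlembert (-((√2 / 2) • hyperbolaDeriv)) ((√2 / 2) • circleDeriv) := by
  funext p
  rw [fu, f_eq_dAlembert, fderiv_dAlembert_apply ((hasDerivAt_hyperbola _).const_smul _)
    ((hasDerivAt_circle _).const_smul _)]
  simp [dAlembert, sub_eq_neg_add]

theorem fv_apply (p : ℝ × ℝ) :
    fv p = (√2 / 2) • (hyperbolaDeriv (p.2 - p.1) + circleDeriv (p.1 + p.2)) := by
  rw [fv, f_eq_dAlembert, fderiv_dAlembert_apply ((hasDerivAt_hyperbola _).const_smul _)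
    ((hasDerivAt_circle _).const_smul _)]
  simp

theorem fuv_eq_neg (p : ℝ × ℝ) : fuv p = -f p := by
  rw [fuv, fu_eq_dAlembert,
    fderiv_dAlembert_apply ((hasDerivAt_hyperbolaDeriv _).const_smul _).neg
      ((hasDerivAt_circleDeriv _).const_smul _), f_eq_dAlembert]
  simp only [sub_zero, zero_add, one_smul, smul_neg, dAlembert, Pi.smul_apply, neg_add_rev]
  abel

end DeSitterSurface

open DeSitterSurface

theorem stmt_15 (p : ℝ × ℝ) :
    mink (f p) (f p) = 1 ∧ mink (ν p) (ν p) = 1 ∧ mink (f p) (ν p) = 0 ∧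
    mink (fu p) (ν p) = 0 ∧ mink (fv p) (ν p) = 0 ∧
    mink (fu p) (fu p) = 0 ∧ mink (fv p) (fv p) = 0 ∧
    mink (fu p) (fv p) = 1 ∧ mink (fuv p) (ν p) = 0 := by
  have h2 : √2 ^ 2 = 2 := sq_sqrt zero_le_two
  have hsc := sin_sq_add_cos_sq (p.1 + p.2)
  have hch := cosh_sq_sub_sinh_sq (p.2 - p.1)
  rw [fuv_eq_neg, fu_eq_dAlembert, f_eq_dAlembert, ν_apply, fv_apply]
  refine ⟨?_, ?_, ?_, ?_, ?_, ?_, ?_, ?_, ?_⟩ <;>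
    simp only [mink, dAlembert, hyperbola, circle, hyperbolaDeriv, circleDeriv, Pi.add_apply,
      Pi.sub_apply, Pi.neg_apply, Pi.smul_apply, smul_eq_mul, Matrix.cons_val] <;>
    grind
end
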